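/- Assume the products are indexed so that v_1 ≥ v_2 ≥ … ≥ v_n. Then some preference-weight-ordered assortment is a 1/2-approximation for the static maximum load assortment problem: there exists m ∈ {1,…,n} with E(M({1,…,m})) ≥ (1/2) · max_{S ⊆ {1,…,n}} E(M(S)). -/

import Mathlib

/-!
Let `S` be an optimal assortment and `W = v(S)`. If `W ≤ v₁` put `P = {1}`; otherwise let `P` be
the longest prefix with `v(P) ≤ 1 + 2W`, so that `W ≤ v(P)`. Packing the items of `S` greedily
(heaviest first) into bins `i ∈ P` of capacity `2 (1 + W) φ_i(P)` gives a map `g : S → P` whose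
fibres satisfy `φ_S(g⁻¹ i) ≤ 2 φ_i(P)`. This is exactly what is needed to couple one customer's
choice under `S` with a choice under `P` (of the correct MNL law) in which a customer choosing `x`
switches to `g x` with probability at least `1/2`. Under the product coupling of the `T`
customers, the customers forming the maximum load of `S`, say at `x`, each add to the load of
`g x` with probability at least `1/2`, so `E M(P) ≥ E M(S) / 2`.
-/

open Finset

/-- MNL choice probability of product `i` when assortment `S` is offered. -/
noncomputable def phi {n : ℕ} (v : Fin n → ℝ) (S : Finset (Fin n)) (i : Fin n) : ℝ :=
  v i / (1 + ∑ j ∈ S, v j)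

/-- MNL no-purchase probability when assortment `S` is offered. -/
noncomputable def phi0 {n : ℕ} (v : Fin n → ℝ) (S : Finset (Fin n)) : ℝ :=
  1 / (1 + ∑ j ∈ S, v j)

/-- Probability of a single customer's choice when assortment `S` is offered:
`some i` (select product `i ∈ S`) has probability `φ_i(S)`, products outside `S`
are never selected, and `none` (no purchase) has probability `φ_0(S)`. -/
noncomputable def chooseProb {n : ℕ} (v : Fin n → ℝ) (S : Finset (Fin n)) :
    Option (Fin n) → ℝ
  | none => phi0 v S
  | some i => if i ∈ S then phi v S i else 0

/-- `staticEM T v S` is the expected maximum load `E(M(S))` when assortment `S` is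
statically offered to `T` customers making independent MNL choices:
`M(S) = max_{i ∈ S} L_i(S)` where `L_i(S)` counts the customers selecting `i`. -/
noncomputable def staticEM {n : ℕ} (T : ℕ) (v : Fin n → ℝ) (S : Finset (Fin n)) : ℝ :=
  ∑ f : Fin T → Option (Fin n),
    (∏ t, chooseProb v S (f t)) *
      ((S.sup fun i => (Finset.univ.filter fun t => f t = some i).card : ℕ) : ℝ)

namespace IidCoupling

open Matrix

variable {O ι : Type*} [Fintype O] [Fintype ι] [DecidableEq ι]

noncomputable def iidExpect (p : O → ℝ) (F : (ι → O) → ℝ) : ℝ :=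
  ∑ f : ι → O, (∏ t, p (f t)) * F f

theorem iidExpect_eq_of_vecMul_eq {p q : O → ℝ} {K : Matrix O O ℝ} (hpK : p ᵥ* K = q)
    (F : (ι → O) → ℝ) :
    iidExpect q F = iidExpect p fun f => ∑ h, (∏ t, K (f t) (h t)) * F h := by
  have hprod (h : ι → O) : ∏ t, q (h t) = ∑ f : ι → O, ∏ t, p (f t) * K (f t) (h t) := by
    simp only [← hpK, vecMul, dotProduct, Fintype.prod_sum]
  simp only [iidExpect, hprod, sum_mul, mul_sum, prod_mul_distrib, mul_assoc]
  exact sum_comm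

variable [DecidableEq O]

def maxLoad (A : Finset O) (f : ι → O) : ℕ :=
  A.sup fun a => #{t | f t = a}

theorem sum_prod_mul_ite_eq (K : ι → O → ℝ) (hK : ∀ t, ∑ o, K t o = 1) (t₀ : ι) (b : O) :
    ∑ h : ι → O, (∏ t, K t (h t)) * (if h t₀ = b then 1 else 0) = K t₀ b := by
  have hfactor (h : ι → O) : (∏ t, K t (h t)) * (if h t₀ = b then 1 else 0) =
      ∏ t, K t (h t) * (if t = t₀ then (if h t = b then 1 else 0) else 1) := by
    rw [prod_mul_distrib, prod_ite_eq' univ t₀ fun t => if h t = b then (1 : ℝ) else 0]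
    simp
  simp only [hfactor]
  rw [← Fintype.prod_sum fun t o => K t o * (if t = t₀ then (if o = b then 1 else 0) else 1)]
  have hrow (t : ι) : ∑ o, K t o * (if t = t₀ then (if o = b then 1 else 0) else 1) =
      if t = t₀ then K t₀ b else 1 := by
    split_ifs with ht
    · subst ht; simp
    · simp [hK t]
  simp only [hrow, prod_ite_eq', mem_univ, if_true]

theorem mul_maxLoad_le_sum {K : Matrix O O ℝ} (hK : K ∈ rowStochastic ℝ O)
    {A B : Finset O} {g : O → O} (hg : ∀ a ∈ A, g a ∈ B) {c : ℝ}
    (hKg : ∀ a ∈ A, c ≤ K a (g a)) (f : ι → O) :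
    c * maxLoad A f ≤ ∑ h, (∏ t, K (f t) (h t)) * maxLoad B h := by
  have hK0 (a b : O) : 0 ≤ K a b := nonneg_of_mem_rowStochastic hK
  rcases A.eq_empty_or_nonempty with rfl | hA
  · simp only [maxLoad, sup_empty, Nat.bot_eq_zero, Nat.cast_zero, mul_zero]
    exact sum_nonneg fun h _ => mul_nonneg (prod_nonneg fun t _ => hK0 _ _) (Nat.cast_nonneg _)
  obtain ⟨a, ha, hmax⟩ := exists_mem_eq_sup A hA fun a => #{t | f t = a}
  have hload (h : ι → O) : (#{t ∈ {t | f t = a} | h t = g a} : ℝ) ≤ maxLoad B h := by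
    exact_mod_cast (card_le_card (filter_subset_filter _ (subset_univ _))).trans
      (le_sup (f := fun b => #{t | h t = b}) (hg a ha))
  calc c * maxLoad A f = ∑ t ∈ {t | f t = a}, c := by simp [maxLoad, hmax, mul_comm]
    _ ≤ ∑ t ∈ {t | f t = a}, K (f t) (g a) :=
        sum_le_sum fun t ht => (mem_filter.1 ht).2 ▸ hKg a ha
    _ = ∑ h, (∏ t, K (f t) (h t)) * #{t ∈ {t | f t = a} | h t = g a} := by
        rw [sum_congr rfl fun t _ => (sum_prod_mul_ite_eq (fun t => K (f t))
          (fun t => sum_row_of_mem_rowStochastic hK _) t (g a)).symm, sum_comm]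
        refine sum_congr rfl fun h _ => ?_
        simp only [← mul_sum, card_filter, Nat.cast_sum, Nat.cast_ite, Nat.cast_one, Nat.cast_zero]
    _ ≤ _ := sum_le_sum fun h _ =>
        mul_le_mul_of_nonneg_left (hload h) (prod_nonneg fun t _ => hK0 _ _)

theorem mul_iidExpect_maxLoad_le {p q : O → ℝ} (hp : ∀ a, 0 ≤ p a) {K : Matrix O O ℝ}
    (hK : K ∈ rowStochastic ℝ O) (hpK : p ᵥ* K = q) {A B : Finset O} {g : O → O}
    (hg : ∀ a ∈ A, g a ∈ B) {c : ℝ} (hKg : ∀ a ∈ A, c ≤ K a (g a)) :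
    c * iidExpect p (fun f : ι → O => (maxLoad A f : ℝ)) ≤
      iidExpect q fun h : ι → O => (maxLoad B h : ℝ) := by
  rw [iidExpect_eq_of_vecMul_eq hpK, iidExpect, iidExpect, mul_sum]
  refine sum_le_sum fun f _ => ?_
  rw [mul_left_comm]
  exact mul_le_mul_of_nonneg_left (mul_maxLoad_le_sum hK hg hKg f)
    (prod_nonneg fun t _ => hp _)

/-- The kernel moves mass `w a` from `a` to `g a` and spreads the remaining mass according to
the normalized residual `q - g_*(p w)`. -/
theorem exists_rowStochastic_of_map_le {p q w : O → ℝ} (g : O → O)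
    (hpq : ∑ a, p a = ∑ a, q a) (hw0 : ∀ a, 0 ≤ w a) (hw1 : ∀ a, w a ≤ 1)
    (hslack : 0 < ∑ a, p a * (1 - w a)) (hdom : ∀ b, ∑ a with g a = b, p a * w a ≤ q b) :
    ∃ K ∈ rowStochastic ℝ O, p ᵥ* K = q ∧ ∀ a, w a ≤ K a (g a) := by
  set β := ∑ a, p a * (1 - w a)
  set μ : O → ℝ := fun b => (q b - ∑ a with g a = b, p a * w a) / β
  have hμ0 (b : O) : 0 ≤ μ b := div_nonneg (sub_nonneg.2 (hdom b)) hslack.le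
  have hμ1 : ∑ b, μ b = 1 := by
    rw [← sum_div, sum_sub_distrib, sum_fiberwise, ← hpq, div_eq_one_iff_eq hslack.ne']
    simp only [β, mul_sub, mul_one, sum_sub_distrib]
  refine ⟨of fun a b => w a * (if g a = b then 1 else 0) + (1 - w a) * μ b, ?_, ?_, ?_⟩
  · refine mem_rowStochastic_iff_sum.2 ⟨fun a b => ?_, fun a => ?_⟩
    · have := hw1 a
      have := hw0 a
      have := hμ0 b
      simp only [of_apply]
      split_ifs <;> positivity
    · simp [sum_add_distrib, ← mul_sum, hμ1]
  · ext b
    simp only [vecMul, dotProduct, of_apply, mul_add, sum_add_distrib, mul_ite, mul_one, mul_zero,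
      ← sum_filter]
    have : ∑ a, p a * ((1 - w a) * μ b) = β * μ b := by
      simp only [β, sum_mul, mul_assoc]
    rw [this, mul_div_cancel₀ _ hslack.ne']
    ring
  · intro a
    have := hμ0 (g a)
    have := hw1 a
    simp only [of_apply, if_true, mul_one]
    nlinarith

end IidCoupling

section MNL

open IidCoupling

variable {n : ℕ} {v : Fin n → ℝ}

theorem one_add_sum_pos (hv : ∀ i, 0 ≤ v i) (S : Finset (Fin n)) : 0 < 1 + ∑ j ∈ S, v j := by
  have := sum_nonneg fun j (_ : j ∈ S) => hv j
  linarith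

theorem phi_nonneg (hv : ∀ i, 0 ≤ v i) (S : Finset (Fin n)) (i : Fin n) : 0 ≤ phi v S i :=
  div_nonneg (hv i) (one_add_sum_pos hv S).le

theorem phi0_pos (hv : ∀ i, 0 ≤ v i) (S : Finset (Fin n)) : 0 < phi0 v S :=
  one_div_pos.2 (one_add_sum_pos hv S)

theorem chooseProb_nonneg (hv : ∀ i, 0 ≤ v i) (S : Finset (Fin n)) (o : Option (Fin n)) :
    0 ≤ chooseProb v S o := by
  cases o with
  | none => exact (phi0_pos hv S).le
  | some i =>
    simp only [chooseProb]
    split_ifs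
    exacts [phi_nonneg hv S i, le_rfl]

theorem sum_chooseProb (hv : ∀ i, 0 ≤ v i) (S : Finset (Fin n)) :
    ∑ o, chooseProb v S o = 1 := by
  simp only [Fintype.sum_option, chooseProb, phi0, phi, sum_ite_mem, univ_inter, ← sum_div,
    ← add_div]
  exact div_self (one_add_sum_pos hv S).ne'

theorem staticEM_eq_iidExpect (T : ℕ) (v : Fin n → ℝ) (S : Finset (Fin n)) :
    staticEM T v S = iidExpect (chooseProb v S) fun f : Fin T → Option (Fin n) =>
      (maxLoad (S.image some) f : ℝ) := by
  simp only [staticEM, iidExpect, maxLoad, sup_image, Function.comp_def]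

def PackedInto (v : Fin n → ℝ) (S P : Finset (Fin n)) (g : Fin n → Fin n) : Prop :=
  (∀ x ∈ S, g x ∈ P) ∧ ∀ i ∈ P, ∑ x ∈ S with g x = i, phi v S x ≤ 2 * phi v P i

theorem sum_map_chooseProb_mul_le (hv : ∀ i, 0 ≤ v i) {S P : Finset (Fin n)}
    {g : Fin n → Fin n} (hpack : PackedInto v S P g) (b : Option (Fin n)) :
    ∑ a with Option.map g a = b, chooseProb v S a * a.elim 0 (fun _ => 1 / 2) ≤
      chooseProb v P b := by
  obtain ⟨hg, hfib⟩ := hpack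
  rw [sum_filter, Fintype.sum_option]
  cases b with
  | none => simpa using chooseProb_nonneg hv P none
  | some i =>
    have hfib' : ∑ x, (if g x = i then chooseProb v S (some x) * (1 / 2) else 0) =
        1 / 2 * ∑ x ∈ S with g x = i, phi v S x := by
      simp only [chooseProb, ite_mul, zero_mul, ← ite_and, ← sum_filter, mul_sum]
      exact sum_congr (by ext; simp [and_comm]) fun _ _ => mul_comm _ _
    simp only [Option.map_none, Option.map_some, Option.some_inj, reduceCtorEq, if_false,
      Option.elim_some, zero_add, hfib']
    by_cases hi : i ∈ P
    · have := hfib i hi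
      simp only [chooseProb, hi, if_true]
      linarith
    · have hempty : ({x ∈ S | g x = i} : Finset (Fin n)) = ∅ :=
        filter_eq_empty_iff.2 fun x hx hgx => hi (hgx ▸ hg x hx)
      simp [chooseProb, hi, hempty]

theorem half_mul_staticEM_le (T : ℕ) (hv : ∀ i, 0 ≤ v i) {S P : Finset (Fin n)}
    {g : Fin n → Fin n} (hpack : PackedInto v S P g) :
    1 / 2 * staticEM T v S ≤ staticEM T v P := by
  set w : Option (Fin n) → ℝ := fun a => a.elim 0 fun _ => 1 / 2
  have hslack : 0 < ∑ a, chooseProb v S a * (1 - w a) := by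
    rw [Fintype.sum_option]
    exact add_pos_of_pos_of_nonneg (by simpa [w, chooseProb] using phi0_pos hv S)
      (sum_nonneg fun x _ => mul_nonneg (chooseProb_nonneg hv S _) (by norm_num [w]))
  obtain ⟨K, hK, hpK, hKw⟩ := exists_rowStochastic_of_map_le (Option.map g)
    (by rw [sum_chooseProb hv, sum_chooseProb hv]) (fun a => by cases a <;> norm_num [w])
    (fun a => by cases a <;> norm_num [w]) hslack (sum_map_chooseProb_mul_le hv hpack)
  rw [staticEM_eq_iidExpect, staticEM_eq_iidExpect]
  refine mul_iidExpect_maxLoad_le (chooseProb_nonneg hv S) hK hpK (g := Option.map g) ?_ ?_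
  · simp only [mem_image, forall_exists_index, and_imp]
    rintro _ x hx rfl
    exact ⟨g x, hpack.1 x hx, rfl⟩
  · simp only [mem_image, forall_exists_index, and_imp]
    rintro _ x - rfl
    exact hKw (some x)

end MNL

section Packing

variable {n k : ℕ} {v : Fin n → ℝ} {c : Fin k → ℝ}

theorem exists_notMem_image_le_card {α : Type*} (g : α → Fin k) (S : Finset α)
    (h : S.image g ≠ univ) : ∃ i ∉ S.image g, (i : ℕ) ≤ #S := by
  obtain ⟨j, -, hj⟩ := exists_of_ssubset (ssubset_univ_iff.2 h)
  let E : Finset (Fin k) := {i | i ∉ S.image g}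
  have hE : E.Nonempty := ⟨j, by simpa [E] using hj⟩
  have hmin : E.min' hE ∉ S.image g := (mem_filter.1 (E.min'_mem hE)).2
  refine ⟨E.min' hE, hmin, ?_⟩
  have hIio : Iio (E.min' hE) ⊆ S.image g := fun i hi => by
    by_contra hiS
    exact absurd (E.min'_le i (by simpa [E] using hiS)) (not_le.2 (mem_Iio.1 hi))
  calc ((E.min' hE : Fin k) : ℕ) = #(Iio (E.min' hE)) := (Fin.card_Iio _).symm
    _ ≤ #(S.image g) := card_le_card hIio
    _ ≤ #S := card_image_le

/-- Either some bin of index at most `#S ≤ x` is empty, and then it has room for `x`, or every bin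
holds an item at least as heavy as `x`, and then the loads plus `v x` would exceed twice the total
weight. -/
theorem exists_sum_fiber_add_le (hv : ∀ x, 0 ≤ v x) (hk : 0 < k)
    (hcap : ∀ (i : Fin k) (x : Fin n), (i : ℕ) ≤ x → v x ≤ c i) (g : Fin n → Fin k)
    {S : Finset (Fin n)} {x : Fin n} (hSx : ∀ y ∈ S, v x ≤ v y) (hcard : #S ≤ x)
    (htot : 2 * (∑ y ∈ S, v y + v x) ≤ ∑ i, c i) :
    ∃ i, ∑ y ∈ S with g y = i, v y + v x ≤ c i := by
  by_cases hsurj : S.image g = univ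
  · by_contra! hfull
    have hload (i : Fin k) : v x ≤ ∑ y ∈ S with g y = i, v y := by
      obtain ⟨y, hy, rfl⟩ := mem_image.1 (hsurj ▸ mem_univ i)
      exact (hSx y hy).trans
        (single_le_sum (fun z _ => hv z) (mem_filter.2 ⟨hy, rfl⟩))
    have hlt : ∑ i, c i < ∑ i, (∑ y ∈ S with g y = i, v y + v x) :=
      sum_lt_sum_of_nonempty (univ_nonempty_iff.2 ⟨⟨0, hk⟩⟩) fun i _ => hfull i
    have hle : ∑ i, (∑ y ∈ S with g y = i, v y + v x) ≤ 2 * ∑ y ∈ S, v y := by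
      rw [← sum_fiberwise S g v, two_mul, ← sum_add_distrib]
      exact sum_le_sum fun i _ => by linarith [hload i]
    linarith [hv x]
  · obtain ⟨i, hi, hik⟩ := exists_notMem_image_le_card g S hsurj
    have hempty : ({y ∈ S | g y = i} : Finset (Fin n)) = ∅ :=
      filter_eq_empty_iff.2 fun y hy hgy => hi (mem_image.2 ⟨y, hy, hgy⟩)
    exact ⟨i, by simpa [hempty] using hcap i x (hik.trans hcard)⟩

/-- Greedy bin packing: insert the items in order of decreasing weight. -/
theorem exists_packing (hv : ∀ x, 0 ≤ v x) (hanti : Antitone v) (hk : 0 < k)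
    (hc : ∀ i, 0 ≤ c i) (hcap : ∀ (i : Fin k) (x : Fin n), (i : ℕ) ≤ x → v x ≤ c i)
    (S : Finset (Fin n)) (htot : 2 * ∑ x ∈ S, v x ≤ ∑ i, c i) :
    ∃ g : Fin n → Fin k, ∀ i, ∑ x ∈ S with g x = i, v x ≤ c i := by
  induction S using Finset.induction_on_max with
  | empty => exact ⟨fun _ => ⟨0, hk⟩, fun i => by simpa using hc i⟩
  | insert x S hSx ih =>
    have hxS : x ∉ S := fun hx => lt_irrefl x (hSx x hx)
    rw [sum_insert hxS] at htot
    obtain ⟨g, hg⟩ := ih (by linarith [hv x])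
    have hcard : #S ≤ x := by
      simpa using card_le_card fun y hy => mem_Iio.2 (hSx y hy)
    obtain ⟨j, hj⟩ := exists_sum_fiber_add_le hv hk hcap g
      (fun y hy => hanti (hSx y hy).le) hcard (by linarith)
    refine ⟨Function.update g x j, fun i => ?_⟩
    have hS : ∑ y ∈ S with Function.update g x j y = i, v y = ∑ y ∈ S with g y = i, v y :=
      sum_congr (filter_congr fun y hy => by
        rw [Function.update_of_ne (ne_of_lt (hSx y hy))]) fun _ _ => rfl
    rw [filter_insert, Function.update_self]
    split_ifs with hji
    · rw [sum_insert (fun h => hxS (mem_filter.1 h).1), hS, ← hji]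
      linarith
    · rw [hS]
      exact hg i

end Packing

section Prefix

variable {n : ℕ} {v : Fin n → ℝ}

def prefixSet (n m : ℕ) : Finset (Fin n) :=
  Finset.univ.filter fun i => (i : ℕ) < m

theorem sum_prefixSet_zero (f : Fin n → ℝ) : ∑ i ∈ prefixSet n 0, f i = 0 := by
  simp [prefixSet]

theorem sum_prefixSet_succ {m : ℕ} (hm : m < n) (f : Fin n → ℝ) :
    ∑ i ∈ prefixSet n (m + 1), f i = ∑ i ∈ prefixSet n m, f i + f ⟨m, hm⟩ := by
  have : prefixSet n (m + 1) = insert ⟨m, hm⟩ (prefixSet n m) := by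
    ext i
    simp only [prefixSet, mem_filter, mem_univ, true_and, mem_insert, Fin.ext_iff]
    omega
  rw [this, sum_insert (by simp [prefixSet]), add_comm]

theorem prefixSet_self (n : ℕ) : prefixSet n n = univ :=
  filter_true_of_mem fun i _ => i.isLt

theorem sum_prefixSet_eq_sum_castLE {k : ℕ} (hkn : k ≤ n) (f : Fin n → ℝ) :
    ∑ i ∈ prefixSet n k, f i = ∑ i : Fin k, f (Fin.castLE hkn i) := by
  have : prefixSet n k = univ.map (Fin.castLEEmb hkn) := by
    ext i
    simp only [prefixSet, mem_filter, mem_univ, true_and, mem_map, Fin.castLEEmb_apply]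
    exact ⟨fun hi => ⟨⟨i, hi⟩, rfl⟩, by rintro ⟨j, rfl⟩; exact j.isLt⟩
  rw [this, sum_map]
  rfl

theorem exists_prefixSet_sum_mem_Icc (hn : 0 < n) (hv : ∀ i, 0 ≤ v i) (hanti : Antitone v)
    {W : ℝ} (hW : v ⟨0, hn⟩ < W) (hWle : W ≤ ∑ j, v j) :
    ∃ k, 1 ≤ k ∧ k ≤ n ∧ W ≤ ∑ j ∈ prefixSet n k, v j ∧ ∑ j ∈ prefixSet n k, v j ≤ 1 + 2 * W := by
  have hV1 : ∑ j ∈ prefixSet n 1, v j = v ⟨0, hn⟩ := by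
    rw [sum_prefixSet_succ hn, sum_prefixSet_zero, zero_add]
  have hP1 : ∑ j ∈ prefixSet n 1, v j ≤ 1 + 2 * W := by linarith [hv ⟨0, hn⟩]
  set P : ℕ → Prop := fun m => ∑ j ∈ prefixSet n m, v j ≤ 1 + 2 * W
  have hk1 := Nat.le_findGreatest (P := P) hn hP1
  have hkn := Nat.findGreatest_le (P := P) n
  have hhigh := Nat.findGreatest_spec (P := P) hn hP1
  have hmax (m : ℕ) : Nat.findGreatest P n < m → m ≤ n → ¬P m := Nat.findGreatest_is_greatest
  generalize Nat.findGreatest P n = k at *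
  refine ⟨k, hk1, hkn, ?_, hhigh⟩
  rcases hkn.eq_or_lt with rfl | hkn
  · rwa [prefixSet_self]
  · have hnext := hmax (k + 1) (lt_add_one k) hkn
    have hstep : v ⟨k, hkn⟩ ≤ v ⟨0, hn⟩ := hanti (Fin.mk_le_mk.2 (Nat.zero_le k))
    simp only [P, sum_prefixSet_succ hkn] at hnext
    linarith

theorem packedInto_prefixSet_one (hn : 0 < n) (hv : ∀ i, 0 ≤ v i) {S : Finset (Fin n)}
    (hS : ∑ j ∈ S, v j ≤ v ⟨0, hn⟩) : PackedInto v S (prefixSet n 1) fun _ => ⟨0, hn⟩ := by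
  refine ⟨fun _ _ => by simp [prefixSet], fun i hi => ?_⟩
  obtain rfl : i = ⟨0, hn⟩ := Fin.ext (by simpa [prefixSet] using hi)
  have hV : ∑ j ∈ prefixSet n 1, v j = v ⟨0, hn⟩ := by
    rw [sum_prefixSet_succ hn, sum_prefixSet_zero, zero_add]
  have hW := sum_nonneg fun j (_ : j ∈ S) => hv j
  simp only [filter_true, phi, ← sum_div, hV]
  rw [mul_div_assoc', div_le_div_iff₀ (by linarith) (by linarith [hv ⟨0, hn⟩])]
  nlinarith

/-- Bin `i` of the prefix gets capacity `2 (1 + v(S)) φ_i(P)`: since `v(P) ≤ 1 + 2 v(S)` it holds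
any single item of weight at most `v i`, and since `v(S) ≤ v(P)` the total capacity is at least
`2 v(S)`. -/
theorem exists_packedInto_prefixSet (hv : ∀ i, 0 ≤ v i) (hanti : Antitone v)
    {S : Finset (Fin n)} {k : ℕ} (hk : 0 < k) (hkn : k ≤ n)
    (hlow : ∑ j ∈ S, v j ≤ ∑ j ∈ prefixSet n k, v j)
    (hhigh : ∑ j ∈ prefixSet n k, v j ≤ 1 + 2 * ∑ j ∈ S, v j) :
    ∃ g, PackedInto v S (prefixSet n k) g := by
  set W := ∑ j ∈ S, v j
  set V := ∑ j ∈ prefixSet n k, v j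
  have hW : 0 ≤ W := sum_nonneg fun j _ => hv j
  have hV : 0 < 1 + V := one_add_sum_pos hv _
  have hphi (i : Fin n) : phi v (prefixSet n k) i = v i / (1 + V) := rfl
  set c : Fin k → ℝ := fun i => 2 * (1 + W) * phi v (prefixSet n k) (Fin.castLE hkn i)
  have hc (i : Fin k) : 0 ≤ c i := mul_nonneg (by positivity) (phi_nonneg hv _ _)
  have hcap (i : Fin k) (x : Fin n) (hix : (i : ℕ) ≤ x) : v x ≤ c i := by
    have hvx : v x ≤ v (Fin.castLE hkn i) := hanti (Fin.le_def.2 hix)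
    have hvi := hv (Fin.castLE hkn i)
    simp only [c, hphi, mul_div_assoc', le_div_iff₀ hV]
    nlinarith
  have htot : 2 * W ≤ ∑ i, c i := by
    simp only [c, hphi, ← mul_sum, ← sum_div, ← sum_prefixSet_eq_sum_castLE hkn]
    rw [mul_div_assoc', le_div_iff₀ hV]
    nlinarith
  obtain ⟨g, hg⟩ := exists_packing hv hanti hk hc hcap S htot
  refine ⟨fun x => Fin.castLE hkn (g x), fun x _ => by simp [prefixSet], fun i hi => ?_⟩
  have hik : (i : ℕ) < k := (mem_filter.1 hi).2
  have hfiber : ({x ∈ S | Fin.castLE hkn (g x) = i} : Finset (Fin n)) =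
      {x ∈ S | g x = ⟨i, hik⟩} :=
    filter_congr fun x _ => by simp [Fin.ext_iff]
  have hW1 : 0 < 1 + W := one_add_sum_pos hv S
  calc ∑ x ∈ S with Fin.castLE hkn (g x) = i, phi v S x
      = (∑ x ∈ S with g x = ⟨i, hik⟩, v x) / (1 + W) := by rw [hfiber, sum_div]; rfl
    _ ≤ c ⟨i, hik⟩ / (1 + W) := by gcongr; exact hg _
    _ = 2 * phi v (prefixSet n k) i := by simp only [c]; field_simp; rfl

theorem exists_prefixSet_packedInto (hn : 0 < n) (hv : ∀ i, 0 ≤ v i) (hanti : Antitone v)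
    (S : Finset (Fin n)) : ∃ k, 1 ≤ k ∧ k ≤ n ∧ ∃ g, PackedInto v S (prefixSet n k) g := by
  by_cases hS : ∑ j ∈ S, v j ≤ v ⟨0, hn⟩
  · exact ⟨1, le_rfl, hn, _, packedInto_prefixSet_one hn hv hS⟩
  · have hSuniv : ∑ j ∈ S, v j ≤ ∑ j, v j := sum_le_univ_sum_of_nonneg hv
    obtain ⟨k, hk1, hkn, hlow, hhigh⟩ :=
      exists_prefixSet_sum_mem_Icc hn hv hanti (not_le.1 hS) hSuniv
    exact ⟨k, hk1, hkn, exists_packedInto_prefixSet hv hanti hk1 hkn hlow hhigh⟩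

end Prefix

/-- Some preference-weight-ordered assortment (a prefix `{1,…,m}` of the products sorted
by weakly decreasing preference weight) is a 1/2-approximation for the static maximum
load assortment problem. -/
theorem weight_ordered_half_approximation
    (n T : ℕ) (hn : 1 ≤ n) (v : Fin n → ℝ) (hv : ∀ i, 0 < v i)
    (hsorted : ∀ i j : Fin n, i ≤ j → v j ≤ v i) :
    ∃ m : ℕ, 1 ≤ m ∧ m ≤ n ∧
      staticEM T v (Finset.univ.filter fun i => (i : ℕ) < m) ≥
        (1 / 2) *
          Finset.univ.powerset.sup' ⟨∅, Finset.empty_mem_powerset _⟩ (staticEM T v) := by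
  obtain ⟨S, -, hS⟩ := exists_mem_eq_sup' ⟨∅, empty_mem_powerset _⟩ (staticEM T v)
  obtain ⟨m, hm1, hmn, g, hg⟩ := exists_prefixSet_packedInto hn (fun i => (hv i).le) hsorted S
  exact ⟨m, hm1, hmn, hS ▸ half_mul_staticEM_le T (fun i => (hv i).le) hg⟩
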